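/- arXiv:1704.07124 — 5 statements merged into one kernel-verified Lean document; each statement's English description precedes it below -/
import Mathlib

section
/- Under Assumption 1, for every state s ∈ X_c^0 of the composed abstraction S_c and every input u ∈ U_c, the transition set δ_c(s,u) is nonempty; consequently the set of enabled inputs satisfies U_c(s) = U_c for all s ∈ X_c^0. -/
open Set Function

/-- `ℝⁿ` modeled as `Fin n → ℝ`. -/
abbrev Vec (n : ℕ) : Type := Fin n → ℝ

/-- Projection `π_{I'}` of a dependent tuple onto the components with indices in `I'`. -/
def proj {ι : Type*} (E : ι → Type*) (I' : Set ι) (x : (i : ι) → E i) : (i : I') → E i.1 :=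
  fun i => x i.1

/-- `P` is a finite partition of `A`: finitely many nonempty pairwise disjoint cells covering `A`. -/
def IsFinPartition {α : Type*} (P : Set (Set α)) (A : Set α) : Prop :=
  P.Finite ∧ (∀ s ∈ P, s.Nonempty) ∧ ⋃₀ P = A ∧
    ∀ s ∈ P, ∀ t ∈ P, s ≠ t → Disjoint s t

/-- The family `A : τ → Set α` is a partition of the index type `α`. -/
def IsIndexPartition {τ α : Type*} (A : τ → Set α) : Prop :=
  (⋃ σ, A σ) = Set.univ ∧ Pairwise (Disjoint on A)

/-- The set `𝒫` of cells `s₁ × ⋯ × s_n̄`, `s_i ∈ 𝒫_i`, of the product partition. -/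
def cells {ι : Type*} {E : ι → Type*} (P : (i : ι) → Set (Set (E i))) :
    Set (Set ((i : ι) → E i)) :=
  { s | ∃ f : (i : ι) → Set (E i), (∀ i, f i ∈ P i) ∧ s = Set.pi Set.univ f }

/-- The set `X_σ⁰` of cells `∏_{i ∈ I'} s_i`, `s_i ∈ 𝒫_i`, of the partition restricted to `I'`. -/
def cellsOn {ι : Type*} {E : ι → Type*} (P : (i : ι) → Set (Set (E i))) (I' : Set ι) :
    Set (Set ((i : I') → E i.1)) :=
  { s | ∃ f : (i : ι) → Set (E i), (∀ i, f i ∈ P i) ∧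
        s = Set.pi Set.univ (fun i : I' => f i.1) }

/-- `F(𝒳',𝒰') = ⋃_{x ∈ 𝒳', u ∈ 𝒰'} F(x,u)`. -/
def Fset {X U : Type*} (F : X → U → Set X) (A : Set X) (B : Set U) : Set X :=
  ⋃ x ∈ A, ⋃ u ∈ B, F x u

/-- `Φ_σ(s_σ,u_σ) = F̄(𝒳 ∩ π_{I_σ}⁻¹(s_σ), 𝒰 ∩ π_{J_σ}⁻¹({u_σ}))`. -/
def Phi {ι κ : Type*} (E : ι → Type*) (Fu : κ → Type*)
    (Fbar : Set ((i : ι) → E i) → Set ((j : κ) → Fu j) → Set ((i : ι) → E i))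
    (Xset : Set ((i : ι) → E i)) (Uset : Set ((j : κ) → Fu j))
    (Iσ : Set ι) (Jσ : Set κ)
    (sσ : Set ((i : Iσ) → E i.1)) (uσ : (j : Jσ) → Fu j.1) : Set ((i : ι) → E i) :=
  Fbar (Xset ∩ proj E Iσ ⁻¹' sσ) (Uset ∩ proj Fu Jσ ⁻¹' {uσ})

/-- `Out_σ = π_{I_σ}(ℝⁿ) \ 𝒳_{I_σ}`. -/
def OutOf {ι : Type*} (E : ι → Type*) (Iσ : Set ι) (Xset : Set ((i : ι) → E i)) :
    Set ((i : Iσ) → E i.1) :=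
  proj E Iσ '' Set.univ \ proj E Iσ '' Xset

/-- Transition map `δ_σ` of the symbolic subsystem `S_σ`. -/
def deltaSub {ι κ : Type*} (E : ι → Type*) (Fu : κ → Type*)
    (Fbar : Set ((i : ι) → E i) → Set ((j : κ) → Fu j) → Set ((i : ι) → E i))
    (Xset : Set ((i : ι) → E i)) (Uset : Set ((j : κ) → Fu j))
    (P : (i : ι) → Set (Set (E i))) (V : (j : κ) → Set (Fu j))
    (Iσ Icσ : Set ι) (Jσ : Set κ)
    (sσ : Set ((i : Iσ) → E i.1)) (uσ : (j : Jσ) → Fu j.1) :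
    Set (Set ((i : Iσ) → E i.1)) :=
  { s' | sσ ∈ cellsOn P Iσ ∧ uσ ∈ Set.pi Set.univ (fun j : Jσ => V j.1) ∧
      ((s' ∈ cellsOn P Iσ ∧
          (s' ∩ proj E Iσ '' Phi E Fu Fbar Xset Uset Iσ Jσ sσ uσ).Nonempty) ∨
        (s' = OutOf E Iσ Xset ∧
          (proj E Iσ '' Phi E Fu Fbar Xset Uset Iσ Jσ sσ uσ ∩ proj E Iσ '' Xset = ∅ ∨
            ¬proj E Icσ '' Phi E Fu Fbar Xset Uset Iσ Jσ sσ uσ ⊆ proj E Icσ '' Xset))) }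

/-- Transition map `δ_c` of the composed abstraction `S_c`. -/
def deltaC {ι κ τ : Type*} (E : ι → Type*) (Fu : κ → Type*)
    (Fbar : Set ((i : ι) → E i) → Set ((j : κ) → Fu j) → Set ((i : ι) → E i))
    (Xset : Set ((i : ι) → E i)) (Uset : Set ((j : κ) → Fu j))
    (P : (i : ι) → Set (Set (E i))) (V : (j : κ) → Set (Fu j))
    (Im Ic : τ → Set ι) (Jm : τ → Set κ)
    (s : Set ((i : ι) → E i)) (u : (j : κ) → Fu j) :
    Set (Set ((i : ι) → E i)) :=
  { s' | s ∈ cells P ∧ u ∈ Set.pi Set.univ V ∧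
      ((s' ∈ cells P ∧ ∀ σ : τ,
          proj E (Im σ) '' s' ∈
            deltaSub E Fu Fbar Xset Uset P V (Im σ) (Ic σ) (Jm σ)
              (proj E (Im σ) '' s) (proj Fu (Jm σ) u)) ∨
        (s' = Xsetᶜ ∧ ∃ σ : τ,
          OutOf E (Im σ) Xset ∈
            deltaSub E Fu Fbar Xset Uset P V (Im σ) (Ic σ) (Jm σ)
              (proj E (Im σ) '' s) (proj Fu (Jm σ) u))) }

/-- Safety controller for the transition map `δ` and the safe set `safe`. -/
def IsSafetyController {X U : Type*} (δ : X → U → Set X) (safe : Set X) (C : X → Set U) : Prop :=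
  (∀ x, ∀ u ∈ C x, (δ x u).Nonempty) ∧
  (∀ x, (C x).Nonempty → x ∈ safe) ∧
  (∀ x, ∀ u ∈ C x, ∀ x', x' ∈ δ x u → (C x').Nonempty)

/-- Maximal safety controller. -/
def IsMaximalSafetyController {X U : Type*} (δ : X → U → Set X) (safe : Set X)
    (Cstar : X → Set U) : Prop :=
  IsSafetyController δ safe Cstar ∧
    ∀ C, IsSafetyController δ safe C → ∀ x, C x ⊆ Cstar x

/-- Feedback refinement relation (over a common input type). -/
def IsFeedbackRefinement {Xa Xb U : Type*} (δa : Xa → U → Set Xa) (δb : Xb → U → Set Xb)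
    (H : Xa → Xb) : Prop :=
  ∀ xa : Xa,
    (∀ u, (δb (H xa) u).Nonempty → (δa xa u).Nonempty) ∧
    (∀ u, (δb (H xa) u).Nonempty → H '' δa xa u ⊆ δb (H xa) u)

/-- Concrete transition map of `S = (ℝⁿ, 𝒰, F)` (inputs restricted to `𝒰`). -/
def deltaConc {X U : Type*} (F : X → U → Set X) (Uset : Set U) (x : X) (u : U) : Set X :=
  { x' | u ∈ Uset ∧ x' ∈ F x u }

/-!
Pick a state `x` in the cell `s` and a successor `x' ∈ F(x, u)`. Since `F̄` over-approximates `F`,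
`x'` lies in every `Φ_σ(s_{I_σ}, u_{J_σ})`. If `x' ∈ 𝒳`, the cell of `𝒫` containing `x'` is a
successor of `s` in every subsystem, hence in `S_c`. Otherwise some coordinate `i` of `x'` leaves
`𝒳_i`; for the `σ` with `i ∈ I_σ^c`, the set `π_{I_σ^c}(Φ_σ)` is not contained in `𝒳_{I_σ^c}`, so
`Out_σ ∈ δ_σ` and `Out ∈ δ_c(s, u)`.
-/

section Abstraction

variable {ι κ τ : Type*} {E : ι → Type*} {Fu : κ → Type*}
  {Fbar : Set ((i : ι) → E i) → Set ((j : κ) → Fu j) → Set ((i : ι) → E i)}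
  {𝒳i : (i : ι) → Set (E i)} {Uset : Set ((j : κ) → Fu j)}
  {P : (i : ι) → Set (Set (E i))} {V : (j : κ) → Set (Fu j)}

open Classical in
lemma proj_image_univ_pi (I' : Set ι) {f : (i : ι) → Set (E i)} (hf : ∀ i, (f i).Nonempty) :
    proj E I' '' Set.pi Set.univ f = Set.pi Set.univ (fun i : I' => f i.1) := by
  ext y
  constructor
  · rintro ⟨x, hx, rfl⟩ i _
    exact hx i.1 trivial
  · intro hy
    refine ⟨fun i => if h : i ∈ I' then y ⟨i, h⟩ else (hf i).choose, fun i _ => ?_, ?_⟩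
    · by_cases h : i ∈ I'
      · simpa [h] using hy ⟨i, h⟩ trivial
      · simpa [h] using (hf i).choose_spec
    · funext i
      simp [proj, i.2]

lemma nonempty_of_mem_cells (hPne : ∀ i, ∀ t ∈ P i, t.Nonempty) {s : Set ((i : ι) → E i)}
    (hs : s ∈ cells P) : s.Nonempty := by
  obtain ⟨f, hf, rfl⟩ := hs
  exact Set.univ_pi_nonempty_iff.2 fun i => hPne i _ (hf i)

lemma subset_of_mem_cells (hPcover : ∀ i, ⋃₀ P i = 𝒳i i) {s : Set ((i : ι) → E i)}
    (hs : s ∈ cells P) : s ⊆ Set.pi Set.univ 𝒳i := by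
  obtain ⟨f, hf, rfl⟩ := hs
  exact Set.pi_mono fun i _ => hPcover i ▸ Set.subset_sUnion_of_mem (hf i)

lemma exists_mem_cells_of_mem (hPcover : ∀ i, ⋃₀ P i = 𝒳i i) {x : (i : ι) → E i}
    (hx : x ∈ Set.pi Set.univ 𝒳i) : ∃ s ∈ cells P, x ∈ s := by
  have hcell : ∀ i, ∃ t ∈ P i, x i ∈ t := fun i => by
    simpa only [← hPcover i, Set.mem_sUnion] using hx i trivial
  choose f hfP hxf using hcell
  exact ⟨Set.pi Set.univ f, ⟨f, hfP, rfl⟩, fun i _ => hxf i⟩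

lemma proj_image_mem_cellsOn (hPne : ∀ i, ∀ t ∈ P i, t.Nonempty) {s : Set ((i : ι) → E i)}
    (hs : s ∈ cells P) (I' : Set ι) : proj E I' '' s ∈ cellsOn P I' := by
  obtain ⟨f, hf, rfl⟩ := hs
  exact ⟨f, hf, proj_image_univ_pi I' fun i => hPne i _ (hf i)⟩

lemma mem_Phi_of_mem_F {F : ((i : ι) → E i) → ((j : κ) → Fu j) → Set ((i : ι) → E i)}
    (hFbar : ∀ A B, Fset F A B ⊆ Fbar A B) {Xset : Set ((i : ι) → E i)}
    {s : Set ((i : ι) → E i)} {x x' : (i : ι) → E i} {u : (j : κ) → Fu j}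
    (hxX : x ∈ Xset) (hxs : x ∈ s) (hu : u ∈ Uset) (hx' : x' ∈ F x u) (Iσ : Set ι) (Jσ : Set κ) :
    x' ∈ Phi E Fu Fbar Xset Uset Iσ Jσ (proj E Iσ '' s) (proj Fu Jσ u) := by
  apply hFbar
  simp only [Fset, Set.mem_iUnion]
  exact ⟨x, ⟨hxX, x, hxs, rfl⟩, u, ⟨hu, rfl⟩, hx'⟩

variable {Im Ic : τ → Set ι} {Jm : τ → Set κ} {s : Set ((i : ι) → E i)} {u : (j : κ) → Fu j}
  {x' : (i : ι) → E i}

lemma cell_mem_deltaC (hPne : ∀ i, ∀ t ∈ P i, t.Nonempty) (hs : s ∈ cells P)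
    (hu : u ∈ Set.pi Set.univ V)
    (hx' : ∀ σ, x' ∈ Phi E Fu Fbar (Set.pi Set.univ 𝒳i) Uset (Im σ) (Jm σ)
      (proj E (Im σ) '' s) (proj Fu (Jm σ) u))
    {s' : Set ((i : ι) → E i)} (hs' : s' ∈ cells P) (hx's' : x' ∈ s') :
    s' ∈ deltaC E Fu Fbar (Set.pi Set.univ 𝒳i) Uset P V Im Ic Jm s u :=
  ⟨hs, hu, Or.inl ⟨hs', fun σ => ⟨proj_image_mem_cellsOn hPne hs _, fun j _ => hu j.1 trivial,
    Or.inl ⟨proj_image_mem_cellsOn hPne hs' _, _, ⟨x', hx's', rfl⟩, ⟨x', hx' σ, rfl⟩⟩⟩⟩⟩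

lemma compl_mem_deltaC (hPne : ∀ i, ∀ t ∈ P i, t.Nonempty) (hIc : ⋃ σ, Ic σ = Set.univ)
    (hs : s ∈ cells P) (hu : u ∈ Set.pi Set.univ V)
    (hx' : ∀ σ, x' ∈ Phi E Fu Fbar (Set.pi Set.univ 𝒳i) Uset (Im σ) (Jm σ)
      (proj E (Im σ) '' s) (proj Fu (Jm σ) u))
    (hx'X : x' ∉ Set.pi Set.univ 𝒳i) :
    (Set.pi Set.univ 𝒳i)ᶜ ∈ deltaC E Fu Fbar (Set.pi Set.univ 𝒳i) Uset P V Im Ic Jm s u := by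
  obtain ⟨i, hi⟩ : ∃ i, x' i ∉ 𝒳i i := by
    simpa only [Set.mem_univ_pi, not_forall] using hx'X
  obtain ⟨σ, hiσ⟩ : ∃ σ, i ∈ Ic σ := Set.mem_iUnion.1 (hIc ▸ Set.mem_univ i)
  have hout : ¬proj E (Ic σ) '' Phi E Fu Fbar (Set.pi Set.univ 𝒳i) Uset (Im σ) (Jm σ)
      (proj E (Im σ) '' s) (proj Fu (Jm σ) u) ⊆ proj E (Ic σ) '' Set.pi Set.univ 𝒳i := by
    intro hsub
    obtain ⟨y, hyX, hy⟩ := hsub ⟨x', hx' σ, rfl⟩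
    have hyi : y i = x' i := congrFun hy ⟨i, hiσ⟩
    exact hi (hyi ▸ hyX i trivial)
  exact ⟨hs, hu, Or.inr ⟨rfl, σ, proj_image_mem_cellsOn hPne hs _, fun j _ => hu j.1 trivial,
    Or.inr ⟨rfl, Or.inr hout⟩⟩⟩

lemma deltaC_nonempty_of_forall_mem_Phi (hPne : ∀ i, ∀ t ∈ P i, t.Nonempty)
    (hPcover : ∀ i, ⋃₀ P i = 𝒳i i) (hIc : ⋃ σ, Ic σ = Set.univ) (hs : s ∈ cells P)
    (hu : u ∈ Set.pi Set.univ V)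
    (hx' : ∀ σ, x' ∈ Phi E Fu Fbar (Set.pi Set.univ 𝒳i) Uset (Im σ) (Jm σ)
      (proj E (Im σ) '' s) (proj Fu (Jm σ) u)) :
    (deltaC E Fu Fbar (Set.pi Set.univ 𝒳i) Uset P V Im Ic Jm s u).Nonempty := by
  by_cases hx'X : x' ∈ Set.pi Set.univ 𝒳i
  · obtain ⟨s', hs', hx's'⟩ := exists_mem_cells_of_mem hPcover hx'X
    exact ⟨s', cell_mem_deltaC hPne hs hu hx' hs' hx's'⟩
  · exact ⟨_, compl_mem_deltaC hPne hIc hs hu hx' hx'X⟩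

lemma mem_pi_of_deltaC_nonempty {Xset : Set ((i : ι) → E i)}
    (h : (deltaC E Fu Fbar Xset Uset P V Im Ic Jm s u).Nonempty) : u ∈ Set.pi Set.univ V :=
  h.some_mem.2.1

end Abstraction

theorem stmt0_general
    {ι κ τ : Type*}
    (nd : ι → ℕ) (pd : κ → ℕ)
    (𝒳i : (i : ι) → Set (Vec (nd i))) (𝒰j : (j : κ) → Set (Vec (pd j)))
    (F : ((i : ι) → Vec (nd i)) → ((j : κ) → Vec (pd j)) → Set ((i : ι) → Vec (nd i)))
    (Fbar : Set ((i : ι) → Vec (nd i)) → Set ((j : κ) → Vec (pd j)) →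
      Set ((i : ι) → Vec (nd i)))
    (P : (i : ι) → Set (Set (Vec (nd i)))) (V : (j : κ) → Set (Vec (pd j)))
    (Im Ic : τ → Set ι) (Jm : τ → Set κ)
    (hF : ∀ x u, u ∈ Set.pi Set.univ 𝒰j → (F x u).Nonempty)
    (hFbar : ∀ A B, Fset F A B ⊆ Fbar A B)
    (hP : ∀ i, IsFinPartition (P i) (𝒳i i))
    (hV : ∀ j, (V j).Finite ∧ V j ⊆ 𝒰j j)
    (hIc : IsIndexPartition Ic) :
    ∀ s ∈ cells P,
      (∀ u ∈ Set.pi Set.univ V, (deltaC (fun i => Vec (nd i)) (fun j => Vec (pd j)) Fbar (Set.pi Set.univ 𝒳i) (Set.pi Set.univ 𝒰j) P V Im Ic Jm s u).Nonempty) ∧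
      {u | (deltaC (fun i => Vec (nd i)) (fun j => Vec (pd j)) Fbar (Set.pi Set.univ 𝒳i) (Set.pi Set.univ 𝒰j) P V Im Ic Jm s u).Nonempty} = Set.pi Set.univ V := by
  intro s hs
  have hPne : ∀ i, ∀ t ∈ P i, t.Nonempty := fun i => (hP i).2.1
  have hPcover : ∀ i, ⋃₀ P i = 𝒳i i := fun i => (hP i).2.2.1
  have hnonempty : ∀ u ∈ Set.pi Set.univ V, (deltaC (fun i => Vec (nd i)) (fun j => Vec (pd j))
      Fbar (Set.pi Set.univ 𝒳i) (Set.pi Set.univ 𝒰j) P V Im Ic Jm s u).Nonempty := by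
    intro u hu
    obtain ⟨x, hxs⟩ := nonempty_of_mem_cells hPne hs
    have huU : u ∈ Set.pi Set.univ 𝒰j := fun j _ => (hV j).2 (hu j trivial)
    obtain ⟨x', hx'⟩ := hF x u huU
    exact deltaC_nonempty_of_forall_mem_Phi hPne hPcover hIc.1 hs hu fun σ =>
      mem_Phi_of_mem_F hFbar (subset_of_mem_cells hPcover hs hxs) hxs huU hx' _ _
  exact ⟨hnonempty, Set.ext fun u => ⟨mem_pi_of_deltaC_nonempty, hnonempty u⟩⟩

theorem stmt0
    {ι κ τ : Type*} [Finite ι] [Finite κ] [Finite τ]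
    (nd : ι → ℕ) (pd : κ → ℕ)
    (𝒳i : (i : ι) → Set (Vec (nd i))) (𝒰j : (j : κ) → Set (Vec (pd j)))
    (F : ((i : ι) → Vec (nd i)) → ((j : κ) → Vec (pd j)) → Set ((i : ι) → Vec (nd i)))
    (Fbar : Set ((i : ι) → Vec (nd i)) → Set ((j : κ) → Vec (pd j)) →
      Set ((i : ι) → Vec (nd i)))
    (P : (i : ι) → Set (Set (Vec (nd i)))) (V : (j : κ) → Set (Vec (pd j)))
    (Im Ic : τ → Set ι) (Jm : τ → Set κ)
    (hF : ∀ x u, u ∈ Set.pi Set.univ 𝒰j → (F x u).Nonempty)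
    (hFbar : ∀ A B, Fset F A B ⊆ Fbar A B)
    (hP : ∀ i, IsFinPartition (P i) (𝒳i i))
    (hV : ∀ j, (V j).Finite ∧ V j ⊆ 𝒰j j)
    (hIc : IsIndexPartition Ic) (hIcne : ∀ σ, (Ic σ).Nonempty) (hIcIm : ∀ σ, Ic σ ⊆ Im σ)
    (hJ : IsIndexPartition Jm) (hJne : ∀ σ, (Jm σ).Nonempty) :
    ∀ s ∈ cells P,
      (∀ u ∈ Set.pi Set.univ V, (deltaC (fun i => Vec (nd i)) (fun j => Vec (pd j)) Fbar (Set.pi Set.univ 𝒳i) (Set.pi Set.univ 𝒰j) P V Im Ic Jm s u).Nonempty) ∧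
      {u | (deltaC (fun i => Vec (nd i)) (fun j => Vec (pd j)) Fbar (Set.pi Set.univ 𝒳i) (Set.pi Set.univ 𝒰j) P V Im Ic Jm s u).Nonempty} = Set.pi Set.univ V :=
  stmt0_general nd pd 𝒳i 𝒰j F Fbar P V Im Ic Jm hF hFbar hP hV hIc
end

section
/- Under Assumption 1, if additionally I_σ^c = I_σ for all σ ∈ Σ (non-overlapping modeled state sets), then the composed controller C_c is the maximal safety controller for the composed abstraction S_c and safe set X_c^0; that is, every safety controller C' for S_c and X_c^0 satisfies C'(s) ⊆ C_c(s) for all s ∈ X_c. -/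
/-!
With non-overlapping blocks `I_σ = I_σ^c` partitioning the state indices, a cell of `𝒫` is the
same as a tuple of cells of the subsystems, one per `σ`, and inputs split the same way along the
`J_σ`. Hence `C_c` is a safety controller: successors chosen by the `C*_σ` glue to a successor in
`S_c`, and `Out_σ` is never reachable under `C*_σ`. Conversely, a safety controller `C'` of `S_c`
projects blockwise to a safety controller of every `S_σ` (a `σ`-successor glued with the other
blocks of an existing `S_c`-successor is again an `S_c`-successor), so its projections lie below
the maximal `C*_σ`, which puts `C'(s)` inside `C_c(s)`.
-/


open Set Function

lemma IsSafetyController.mem_safe_of_mem_succ {X U : Type*} {δ : X → U → Set X} {safe : Set X}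
    {C : X → Set U} (hC : IsSafetyController δ safe C) {x x' : X} {u : U} (hu : u ∈ C x)
    (hx' : x' ∈ δ x u) : x' ∈ safe :=
  hC.2.1 x' (hC.2.2 x u hu x' hx')

lemma IsFinPartition.nonempty_of_mem {α : Type*} {P : Set (Set α)} {A : Set α}
    (hP : IsFinPartition P A) {s : Set α} (hs : s ∈ P) : s.Nonempty :=
  hP.2.1 s hs

lemma IsFinPartition.subset_of_mem {α : Type*} {P : Set (Set α)} {A : Set α}
    (hP : IsFinPartition P A) {s : Set α} (hs : s ∈ P) : s ⊆ A :=
  hP.2.2.1 ▸ subset_sUnion_of_mem hs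

section Projections

variable {ι : Type*} {E : ι → Type*}

lemma proj_image_pi (I' : Set ι) {f : (i : ι) → Set (E i)} (hf : ∀ i, (f i).Nonempty) :
    proj E I' '' pi univ f = pi univ (fun i : I' => f i.1) := by
  classical
  ext g
  constructor
  · rintro ⟨x, hx, rfl⟩ i _
    exact hx i.1 trivial
  · intro hg
    refine ⟨fun i => if h : i ∈ I' then g ⟨i, h⟩ else (hf i).some, fun i _ => ?_, ?_⟩
    · by_cases h : i ∈ I'
      · simpa [h] using hg ⟨i, h⟩ trivial
      · simpa [h] using (hf i).some_mem
    · funext i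
      simp [proj, i.2]

lemma exists_proj_eq_of_isIndexPartition {τ : Type*} {A : τ → Set ι} (hA : IsIndexPartition A)
    (g : (σ : τ) → (i : A σ) → E i.1) : ∃ x : (i : ι) → E i, ∀ σ, proj E (A σ) x = g σ := by
  have hcover : ∀ i, ∃ σ, i ∈ A σ := fun i => mem_iUnion.1 (hA.1 ▸ mem_univ i)
  choose block mem_block using hcover
  refine ⟨fun i => g (block i) ⟨i, mem_block i⟩, fun σ => funext fun ⟨i, hi⟩ => ?_⟩
  obtain rfl : block i = σ := by
    by_contra hne
    exact disjoint_left.1 (hA.2 hne) (mem_block i) hi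
  rfl

end Projections

section Cells

variable {ι τ : Type*} {E : ι → Type*} {P : (i : ι) → Set (Set (E i))}

lemma mem_cellsOn_iff (hPne : ∀ i, ∀ t ∈ P i, t.Nonempty) {I' : Set ι}
    {c : Set ((i : I') → E i.1)} : c ∈ cellsOn P I' ↔ ∃ s ∈ cells P, proj E I' '' s = c := by
  constructor
  · rintro ⟨f, hf, rfl⟩
    exact ⟨pi univ f, ⟨f, hf, rfl⟩, proj_image_pi I' fun i => hPne i _ (hf i)⟩
  · rintro ⟨_, ⟨f, hf, rfl⟩, rfl⟩
    exact ⟨f, hf, proj_image_pi I' fun i => hPne i _ (hf i)⟩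

lemma exists_mem_cells_proj_eq (hPne : ∀ i, ∀ t ∈ P i, t.Nonempty) {A : τ → Set ι}
    (hA : IsIndexPartition A) {c : (σ : τ) → Set ((i : A σ) → E i.1)}
    (hc : ∀ σ, c σ ∈ cellsOn P (A σ)) : ∃ s ∈ cells P, ∀ σ, proj E (A σ) '' s = c σ := by
  choose f hf hfc using hc
  obtain ⟨g, hg⟩ := exists_proj_eq_of_isIndexPartition (E := fun i => Set (E i)) hA
    fun σ i => f σ i.1
  have hg_eq : ∀ σ, ∀ i ∈ A σ, g i = f σ i := fun σ i hi => congrFun (hg σ) ⟨i, hi⟩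
  have hgP : ∀ i, g i ∈ P i := fun i => by
    obtain ⟨σ, hi⟩ := mem_iUnion.1 (hA.1 ▸ mem_univ i)
    exact hg_eq σ i hi ▸ hf σ i
  refine ⟨pi univ g, ⟨g, hgP, rfl⟩, fun σ => ?_⟩
  rw [proj_image_pi _ fun i => hPne i _ (hgP i), hfc σ]
  exact congrArg (pi univ) (funext fun i => hg_eq σ i i.2)

variable {𝒳 : (i : ι) → Set (E i)}

lemma compl_pi_notMem_cells (hPne : ∀ i, ∀ t ∈ P i, t.Nonempty)
    (hP𝒳 : ∀ i, ∀ t ∈ P i, t ⊆ 𝒳 i) : (pi univ 𝒳)ᶜ ∉ cells P := by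
  rintro ⟨f, hf, hcompl⟩
  obtain ⟨x, hx⟩ := univ_pi_nonempty_iff.2 fun i => hPne i _ (hf i)
  exact (hcompl ▸ hx : x ∈ (pi univ 𝒳)ᶜ) fun i _ => hP𝒳 i _ (hf i) (hx i trivial)

lemma outOf_notMem_cellsOn (hPne : ∀ i, ∀ t ∈ P i, t.Nonempty)
    (hP𝒳 : ∀ i, ∀ t ∈ P i, t ⊆ 𝒳 i) (I' : Set ι) : OutOf E I' (pi univ 𝒳) ∉ cellsOn P I' := by
  rw [mem_cellsOn_iff hPne]
  rintro ⟨_, ⟨f, hf, rfl⟩, hout⟩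
  obtain ⟨x, hx⟩ := univ_pi_nonempty_iff.2 fun i => hPne i _ (hf i)
  have hx_out : proj E I' x ∈ OutOf E I' (pi univ 𝒳) := hout ▸ mem_image_of_mem _ hx
  exact hx_out.2 ⟨x, fun i _ => hP𝒳 i _ (hf i) (hx i trivial), rfl⟩

end Cells

section Controllers

variable {ι κ τ : Type*} {E : ι → Type*} {Fu : κ → Type*}

def composedController (P : (i : ι) → Set (Set (E i))) (V : (j : κ) → Set (Fu j))
    (Im : τ → Set ι) (Jm : τ → Set κ)
    (Cstar : (σ : τ) → Set ((i : Im σ) → E i.1) → Set ((j : Jm σ) → Fu j.1))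
    (s : Set ((i : ι) → E i)) : Set ((j : κ) → Fu j) :=
  {u | s ∈ cells P ∧ u ∈ pi univ V ∧ ∀ σ, proj Fu (Jm σ) u ∈ Cstar σ (proj E (Im σ) '' s)}

def projController (C : Set ((i : ι) → E i) → Set ((j : κ) → Fu j)) (I' : Set ι) (J' : Set κ)
    (c : Set ((i : I') → E i.1)) : Set ((j : J') → Fu j.1) :=
  {v | ∃ s, proj E I' '' s = c ∧ ∃ u ∈ C s, proj Fu J' u = v}

variable {Fbar : Set ((i : ι) → E i) → Set ((j : κ) → Fu j) → Set ((i : ι) → E i)}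
  {𝒳 : (i : ι) → Set (E i)} {Uset : Set ((j : κ) → Fu j)}
  {P : (i : ι) → Set (Set (E i))} {V : (j : κ) → Set (Fu j)}
  {Im Ic : τ → Set ι} {Jm : τ → Set κ}

local notation "δσ" σ:max => deltaSub E Fu Fbar (pi univ 𝒳) Uset P V (Im σ) (Ic σ) (Jm σ)
local notation "δc" => deltaC E Fu Fbar (pi univ 𝒳) Uset P V Im Ic Jm

lemma mem_deltaSub_cases {σ : τ} {c c' : Set ((i : Im σ) → E i.1)} {v : (j : Jm σ) → Fu j.1}
    (h : c' ∈ (δσ σ) c v) : c' ∈ cellsOn P (Im σ) ∨ c' = OutOf E (Im σ) (pi univ 𝒳) := by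
  rcases h.2.2 with h | h
  exacts [Or.inl h.1, Or.inr h.1]

lemma forall_proj_mem_deltaSub_of_mem_deltaC (hPne : ∀ i, ∀ t ∈ P i, t.Nonempty)
    (hP𝒳 : ∀ i, ∀ t ∈ P i, t ⊆ 𝒳 i) {s s' : Set ((i : ι) → E i)} {u : (j : κ) → Fu j}
    (h : s' ∈ δc s u) (hs' : s' ∈ cells P) :
    ∀ σ, proj E (Im σ) '' s' ∈ (δσ σ) (proj E (Im σ) '' s) (proj Fu (Jm σ) u) := by
  rcases h.2.2 with h | ⟨rfl, -⟩
  exacts [h.2, absurd hs' (compl_pi_notMem_cells hPne hP𝒳)]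

lemma isSafetyController_composedController (hPne : ∀ i, ∀ t ∈ P i, t.Nonempty)
    (hP𝒳 : ∀ i, ∀ t ∈ P i, t ⊆ 𝒳 i) (hIm : IsIndexPartition Im) (hJm : IsIndexPartition Jm)
    {Cstar : (σ : τ) → Set ((i : Im σ) → E i.1) → Set ((j : Jm σ) → Fu j.1)}
    (hCstar : ∀ σ, IsSafetyController (δσ σ) (cellsOn P (Im σ)) (Cstar σ)) :
    IsSafetyController δc (cells P) (composedController P V Im Jm Cstar) := by
  refine ⟨fun s u hu => ?_, fun s ⟨u, hu⟩ => hu.1, fun s u hu s' hs' => ?_⟩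
  · obtain ⟨hs, huV, hCu⟩ := hu
    choose c hc using fun σ => (hCstar σ).1 _ _ (hCu σ)
    obtain ⟨s', hs', hproj⟩ := exists_mem_cells_proj_eq hPne hIm
      fun σ => (hCstar σ).mem_safe_of_mem_succ (hCu σ) (hc σ)
    exact ⟨s', hs, huV, Or.inl ⟨hs', fun σ => hproj σ ▸ hc σ⟩⟩
  · obtain ⟨-, -, hCu⟩ := hu
    rcases hs'.2.2 with ⟨hs'c, hsucc⟩ | ⟨-, σ, hout⟩
    · choose v hv using fun σ => (hCstar σ).2.2 _ _ (hCu σ) _ (hsucc σ)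
      obtain ⟨u', hu'⟩ := exists_proj_eq_of_isIndexPartition hJm v
      refine ⟨u', hs'c, fun j _ => ?_, fun σ => hu' σ ▸ hv σ⟩
      obtain ⟨σ, hj⟩ := mem_iUnion.1 (hJm.1 ▸ mem_univ j)
      obtain ⟨_, hvV⟩ := (hCstar σ).1 _ _ (hv σ)
      change proj Fu (Jm σ) u' ⟨j, hj⟩ ∈ V j
      rw [hu' σ]
      exact hvV.2.1 ⟨j, hj⟩ trivial
    · exact absurd ((hCstar σ).mem_safe_of_mem_succ (hCu σ) hout)
        (outOf_notMem_cellsOn hPne hP𝒳 _)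

lemma isSafetyController_projController (hPne : ∀ i, ∀ t ∈ P i, t.Nonempty)
    (hP𝒳 : ∀ i, ∀ t ∈ P i, t ⊆ 𝒳 i) (hIm : IsIndexPartition Im)
    {C : Set ((i : ι) → E i) → Set ((j : κ) → Fu j)} (hC : IsSafetyController δc (cells P) C)
    (σ : τ) : IsSafetyController (δσ σ) (cellsOn P (Im σ)) (projController C (Im σ) (Jm σ)) := by
  refine ⟨?_, ?_, ?_⟩
  · rintro _ _ ⟨s, rfl, u, hu, rfl⟩
    obtain ⟨s', hs'⟩ := hC.1 s u hu
    exact ⟨_, forall_proj_mem_deltaSub_of_mem_deltaC hPne hP𝒳 hs'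
      (hC.mem_safe_of_mem_succ hu hs') σ⟩
  · rintro _ ⟨_, s, rfl, u, hu, rfl⟩
    exact (mem_cellsOn_iff hPne).2 ⟨s, hC.2.1 s ⟨u, hu⟩, rfl⟩
  · rintro _ _ ⟨s, rfl, u, hu, rfl⟩ c' hc'
    obtain ⟨s', hs'⟩ := hC.1 s u hu
    have hs'c := hC.mem_safe_of_mem_succ hu hs'
    have hsucc := forall_proj_mem_deltaSub_of_mem_deltaC hPne hP𝒳 hs' hs'c
    rcases mem_deltaSub_cases hc' with hc'c | rfl
    · classical
      -- `s''` is `s'` with its `Im σ`-block replaced by `c'`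
      obtain ⟨s'', hs''c, hproj⟩ := exists_mem_cells_proj_eq hPne hIm
        (c := update (fun σ' => proj E (Im σ') '' s') σ c') fun σ' => by
          rcases eq_or_ne σ' σ with rfl | hne
          · simpa using hc'c
          · simpa [hne] using (mem_cellsOn_iff hPne).2 ⟨s', hs'c, rfl⟩
      have hs'' : s'' ∈ δc s u := ⟨hs'.1, hs'.2.1, Or.inl ⟨hs''c, fun σ' => by
        rw [hproj σ']
        rcases eq_or_ne σ' σ with rfl | hne
        · simpa using hc'
        · simpa [hne] using hsucc σ'⟩⟩
      obtain ⟨u'', hu''⟩ := hC.2.2 s u hu s'' hs''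
      exact ⟨_, s'', by rw [hproj, update_self], u'', hu'', rfl⟩
    · have hout : (pi univ 𝒳)ᶜ ∈ δc s u := ⟨hs'.1, hs'.2.1, Or.inr ⟨rfl, σ, hc'⟩⟩
      exact absurd (hC.mem_safe_of_mem_succ hu hout) (compl_pi_notMem_cells hPne hP𝒳)

lemma subset_composedController (hPne : ∀ i, ∀ t ∈ P i, t.Nonempty)
    (hP𝒳 : ∀ i, ∀ t ∈ P i, t ⊆ 𝒳 i) (hIm : IsIndexPartition Im)
    {Cstar : (σ : τ) → Set ((i : Im σ) → E i.1) → Set ((j : Jm σ) → Fu j.1)}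
    (hCstar : ∀ σ, IsMaximalSafetyController (δσ σ) (cellsOn P (Im σ)) (Cstar σ))
    {C : Set ((i : ι) → E i) → Set ((j : κ) → Fu j)} (hC : IsSafetyController δc (cells P) C)
    (s : Set ((i : ι) → E i)) : C s ⊆ composedController P V Im Jm Cstar s := by
  intro u hu
  obtain ⟨s', hs'⟩ := hC.1 s u hu
  exact ⟨hC.2.1 s ⟨u, hu⟩, hs'.2.1, fun σ => (hCstar σ).2 _
    (isSafetyController_projController hPne hP𝒳 hIm hC σ) _ ⟨s, rfl, u, hu, rfl⟩⟩

theorem isMaximalSafetyController_composedController (hPne : ∀ i, ∀ t ∈ P i, t.Nonempty)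
    (hP𝒳 : ∀ i, ∀ t ∈ P i, t ⊆ 𝒳 i) (hIm : IsIndexPartition Im) (hJm : IsIndexPartition Jm)
    {Cstar : (σ : τ) → Set ((i : Im σ) → E i.1) → Set ((j : Jm σ) → Fu j.1)}
    (hCstar : ∀ σ, IsMaximalSafetyController (δσ σ) (cellsOn P (Im σ)) (Cstar σ)) :
    IsMaximalSafetyController δc (cells P) (composedController P V Im Jm Cstar) :=
  ⟨isSafetyController_composedController hPne hP𝒳 hIm hJm fun σ => (hCstar σ).1,
    fun _ hC => subset_composedController hPne hP𝒳 hIm hCstar hC⟩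

end Controllers

theorem stmt4_general
    {ι κ τ : Type*}
    (nd : ι → ℕ) (pd : κ → ℕ)
    (𝒳i : (i : ι) → Set (Vec (nd i))) (𝒰j : (j : κ) → Set (Vec (pd j)))
    (Fbar : Set ((i : ι) → Vec (nd i)) → Set ((j : κ) → Vec (pd j)) →
      Set ((i : ι) → Vec (nd i)))
    (P : (i : ι) → Set (Set (Vec (nd i)))) (V : (j : κ) → Set (Vec (pd j)))
    (Im Ic : τ → Set ι) (Jm : τ → Set κ)
    (hP : ∀ i, IsFinPartition (P i) (𝒳i i))
    (hIc : IsIndexPartition Ic)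
    (hJ : IsIndexPartition Jm)
    (hnov : ∀ σ, Ic σ = Im σ)
    (Cstar : (σ : τ) → Set ((i : Im σ) → Vec (nd i.1)) → Set ((j : Jm σ) → Vec (pd j.1)))
    (hCstar : ∀ σ, IsMaximalSafetyController
      (deltaSub (fun i => Vec (nd i)) (fun j => Vec (pd j)) Fbar (Set.pi Set.univ 𝒳i) (Set.pi Set.univ 𝒰j) P V (Im σ) (Ic σ) (Jm σ)) (cellsOn P (Im σ)) (Cstar σ))
    (Cc : Set ((i : ι) → Vec (nd i)) → Set ((j : κ) → Vec (pd j)))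
    (hCc : ∀ s ∈ cells P, Cc s =
      {u | u ∈ Set.pi Set.univ V ∧ ∀ σ, proj (fun j => Vec (pd j)) (Jm σ) u ∈ Cstar σ (proj (fun i => Vec (nd i)) (Im σ) '' s)})
    (hCcOut : ∀ s ∉ cells P, Cc s = ∅) :
    IsMaximalSafetyController (deltaC (fun i => Vec (nd i)) (fun j => Vec (pd j)) Fbar (Set.pi Set.univ 𝒳i) (Set.pi Set.univ 𝒰j) P V Im Ic Jm) (cells P) Cc := by
  have hIm : IsIndexPartition Im := funext hnov ▸ hIc
  have hCc_eq : Cc = composedController P V Im Jm Cstar := by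
    funext s
    by_cases hs : s ∈ cells P
    · simp only [hCc s hs, composedController, hs, true_and]
    · simp only [hCcOut s hs, composedController, hs, false_and, ofPred_false]
  rw [hCc_eq]
  exact isMaximalSafetyController_composedController (fun i _ => (hP i).nonempty_of_mem)
    (fun i _ => (hP i).subset_of_mem) hIm hJ hCstar

theorem stmt4
    {ι κ τ : Type*} [Finite ι] [Finite κ] [Finite τ]
    (nd : ι → ℕ) (pd : κ → ℕ)
    (𝒳i : (i : ι) → Set (Vec (nd i))) (𝒰j : (j : κ) → Set (Vec (pd j)))
    (F : ((i : ι) → Vec (nd i)) → ((j : κ) → Vec (pd j)) → Set ((i : ι) → Vec (nd i)))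
    (Fbar : Set ((i : ι) → Vec (nd i)) → Set ((j : κ) → Vec (pd j)) →
      Set ((i : ι) → Vec (nd i)))
    (P : (i : ι) → Set (Set (Vec (nd i)))) (V : (j : κ) → Set (Vec (pd j)))
    (Im Ic : τ → Set ι) (Jm : τ → Set κ)
    (hF : ∀ x u, u ∈ Set.pi Set.univ 𝒰j → (F x u).Nonempty)
    (hFbar : ∀ A B, Fset F A B ⊆ Fbar A B)
    (hP : ∀ i, IsFinPartition (P i) (𝒳i i))
    (hV : ∀ j, (V j).Finite ∧ V j ⊆ 𝒰j j)
    (hIc : IsIndexPartition Ic) (hIcne : ∀ σ, (Ic σ).Nonempty) (hIcIm : ∀ σ, Ic σ ⊆ Im σ)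
    (hJ : IsIndexPartition Jm) (hJne : ∀ σ, (Jm σ).Nonempty)
    (hnov : ∀ σ, Ic σ = Im σ)
    (Cstar : (σ : τ) → Set ((i : Im σ) → Vec (nd i.1)) → Set ((j : Jm σ) → Vec (pd j.1)))
    (hCstar : ∀ σ, IsMaximalSafetyController
      (deltaSub (fun i => Vec (nd i)) (fun j => Vec (pd j)) Fbar (Set.pi Set.univ 𝒳i) (Set.pi Set.univ 𝒰j) P V (Im σ) (Ic σ) (Jm σ)) (cellsOn P (Im σ)) (Cstar σ))
    (Cc : Set ((i : ι) → Vec (nd i)) → Set ((j : κ) → Vec (pd j)))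
    (hCc : ∀ s ∈ cells P, Cc s =
      {u | u ∈ Set.pi Set.univ V ∧ ∀ σ, proj (fun j => Vec (pd j)) (Jm σ) u ∈ Cstar σ (proj (fun i => Vec (nd i)) (Im σ) '' s)})
    (hCcOut : ∀ s ∉ cells P, Cc s = ∅) :
    IsMaximalSafetyController (deltaC (fun i => Vec (nd i)) (fun j => Vec (pd j)) Fbar (Set.pi Set.univ 𝒳i) (Set.pi Set.univ 𝒰j) P V Im Ic Jm) (cells P) Cc :=
  stmt4_general nd pd 𝒳i 𝒰j Fbar P V Im Ic Jm hP hIc hJ hnov Cstar hCstar Cc hCc hCcOut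
end

section
/- Let S_a=(X_a,U_a,δ_a) and S_b=(X_b,U_b,δ_b) be transition systems with U_b ⊆ U_a, and let H : X_a → X_b be a feedback refinement relation from S_a to S_b. If C_b : X_b → 2^{U_b} is a safety controller for S_b and a safe set 𝒳_b ⊆ X_b, then the map C_a : X_a → 2^{U_a} defined by C_a(x_a) = C_b(H(x_a)) is a safety controller for S_a and the safe set 𝒳_a = H^{-1}(𝒳_b). -/
open Set Function

theorem IsFeedbackRefinement.map_mem {Xa Xb U : Type*} {δa : Xa → U → Set Xa}
    {δb : Xb → U → Set Xb} {H : Xa → Xb} (hH : IsFeedbackRefinement δa δb H) {xa xa' : Xa} {u : U}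
    (hu : (δb (H xa) u).Nonempty) (hxa' : xa' ∈ δa xa u) : H xa' ∈ δb (H xa) u :=
  (hH xa).2 u hu (mem_image_of_mem H hxa')

theorem stmt7 {Xa Xb U : Type*} (δa : Xa → U → Set Xa) (δb : Xb → U → Set Xb)
    (H : Xa → Xb) (hH : IsFeedbackRefinement δa δb H)
    (safeB : Set Xb) (Cb : Xb → Set U) (hCb : IsSafetyController δb safeB Cb) :
    IsSafetyController δa (H ⁻¹' safeB) (fun xa => Cb (H xa)) := by
  obtain ⟨enabled, safe, invariant⟩ := hCb
  refine ⟨fun xa u hu => (hH xa).1 u (enabled _ u hu), fun xa hxa => safe _ hxa, ?_⟩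
  intro xa u hu xa' hxa'
  exact invariant _ u hu _ (hH.map_mem (enabled _ u hu) hxa')
end

section
/- Under Assumption 1, for every s ∈ X_c^0 = 𝒫 and u ∈ U_c = 𝒱: if π_{I_σ^c}(Φ_σ(s_{I_σ},u_{J_σ})) ⊆ 𝒳_{I_σ^c} for all σ ∈ Σ, then F(s,{u}) ⊆ 𝒳. -/
open Set Function

/-! Every successor of a cell lies in each `Φ_σ`, whose `I_σ^c`-components are safe by hypothesis;
since the sets `I_σ^c` cover all indices, every component of the successor is safe. -/

theorem cells_subset_pi {ι : Type*} {E : ι → Type*} {P : (i : ι) → Set (Set (E i))}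
    {A : (i : ι) → Set (E i)} (hP : ∀ i, ⋃₀ P i ⊆ A i) {s : Set ((i : ι) → E i)}
    (hs : s ∈ cells P) : s ⊆ Set.pi Set.univ A := by
  obtain ⟨f, hf, rfl⟩ := hs
  exact Set.pi_mono fun i _ => (Set.subset_sUnion_of_mem (hf i)).trans (hP i)

theorem Fset_mono {X U : Type*} {F : X → U → Set X} {A A' : Set X} {B B' : Set U}
    (hA : A ⊆ A') (hB : B ⊆ B') : Fset F A B ⊆ Fset F A' B' :=
  Set.biUnion_mono hA fun _ _ => Set.biUnion_mono hB fun _ _ => subset_rfl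

theorem Fset_inter_subset_Phi {ι κ : Type*} {E : ι → Type*} {Fu : κ → Type*}
    {F : ((i : ι) → E i) → ((j : κ) → Fu j) → Set ((i : ι) → E i)}
    {Fbar : Set ((i : ι) → E i) → Set ((j : κ) → Fu j) → Set ((i : ι) → E i)}
    (hFbar : ∀ A B, Fset F A B ⊆ Fbar A B)
    {Xset : Set ((i : ι) → E i)} {Uset : Set ((j : κ) → Fu j)} (Iσ : Set ι) (Jσ : Set κ)
    {s : Set ((i : ι) → E i)} {u : (j : κ) → Fu j} (hu : u ∈ Uset) :
    Fset F (Xset ∩ s) {u} ⊆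
      Phi E Fu Fbar Xset Uset Iσ Jσ (proj E Iσ '' s) (proj Fu Jσ u) := by
  refine (Fset_mono ?_ ?_).trans (hFbar _ _)
  · exact Set.inter_subset_inter_right _ (Set.subset_preimage_image _ _)
  · exact Set.subset_inter (Set.singleton_subset_iff.mpr hu) (by simp)

theorem mem_pi_of_forall_proj_mem_image {ι τ : Type*} {E : ι → Type*}
    {Ic : τ → Set ι} (hcover : (⋃ σ, Ic σ) = Set.univ) {A : (i : ι) → Set (E i)}
    {x : (i : ι) → E i} (h : ∀ σ, proj E (Ic σ) x ∈ proj E (Ic σ) '' Set.pi Set.univ A) :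
    x ∈ Set.pi Set.univ A := by
  intro i _
  obtain ⟨σ, hiσ⟩ := Set.mem_iUnion.mp (hcover ▸ Set.mem_univ i)
  obtain ⟨y, hy, hyx⟩ := h σ
  have hyx_i : y i = x i := congrFun hyx ⟨i, hiσ⟩
  exact hyx_i ▸ hy i trivial

theorem stmt12_general
    {ι κ τ : Type*}
    (nd : ι → ℕ) (pd : κ → ℕ)
    (𝒳i : (i : ι) → Set (Vec (nd i))) (𝒰j : (j : κ) → Set (Vec (pd j)))
    (F : ((i : ι) → Vec (nd i)) → ((j : κ) → Vec (pd j)) → Set ((i : ι) → Vec (nd i)))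
    (Fbar : Set ((i : ι) → Vec (nd i)) → Set ((j : κ) → Vec (pd j)) →
      Set ((i : ι) → Vec (nd i)))
    (P : (i : ι) → Set (Set (Vec (nd i)))) (V : (j : κ) → Set (Vec (pd j)))
    (Im Ic : τ → Set ι) (Jm : τ → Set κ)
    (hFbar : ∀ A B, Fset F A B ⊆ Fbar A B)
    (hP : ∀ i, IsFinPartition (P i) (𝒳i i))
    (hV : ∀ j, (V j).Finite ∧ V j ⊆ 𝒰j j)
    (hIc : IsIndexPartition Ic) :
    ∀ s ∈ cells P, ∀ u ∈ Set.pi Set.univ V,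
      (∀ σ, proj (fun i => Vec (nd i)) (Ic σ) ''
          Phi (fun i => Vec (nd i)) (fun j => Vec (pd j)) Fbar (Set.pi Set.univ 𝒳i) (Set.pi Set.univ 𝒰j) (Im σ) (Jm σ) (proj (fun i => Vec (nd i)) (Im σ) '' s) (proj (fun j => Vec (pd j)) (Jm σ) u) ⊆
        proj (fun i => Vec (nd i)) (Ic σ) '' (Set.pi Set.univ 𝒳i)) →
      Fset F s {u} ⊆ (Set.pi Set.univ 𝒳i) := by
  intro s hs u hu hsafe x' hx'
  have hsX : s ⊆ Set.pi Set.univ 𝒳i := cells_subset_pi (fun i => (hP i).2.2.1.subset) hs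
  have huU : u ∈ Set.pi Set.univ 𝒰j := fun j _ => (hV j).2 (hu j trivial)
  rw [← Set.inter_eq_right.mpr hsX] at hx'
  exact mem_pi_of_forall_proj_mem_image hIc.1 fun σ =>
    hsafe σ ⟨x', Fset_inter_subset_Phi hFbar (Im σ) (Jm σ) huU hx', rfl⟩

theorem stmt12
    {ι κ τ : Type*} [Finite ι] [Finite κ] [Finite τ]
    (nd : ι → ℕ) (pd : κ → ℕ)
    (𝒳i : (i : ι) → Set (Vec (nd i))) (𝒰j : (j : κ) → Set (Vec (pd j)))
    (F : ((i : ι) → Vec (nd i)) → ((j : κ) → Vec (pd j)) → Set ((i : ι) → Vec (nd i)))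
    (Fbar : Set ((i : ι) → Vec (nd i)) → Set ((j : κ) → Vec (pd j)) →
      Set ((i : ι) → Vec (nd i)))
    (P : (i : ι) → Set (Set (Vec (nd i)))) (V : (j : κ) → Set (Vec (pd j)))
    (Im Ic : τ → Set ι) (Jm : τ → Set κ)
    (hF : ∀ x u, u ∈ Set.pi Set.univ 𝒰j → (F x u).Nonempty)
    (hFbar : ∀ A B, Fset F A B ⊆ Fbar A B)
    (hP : ∀ i, IsFinPartition (P i) (𝒳i i))
    (hV : ∀ j, (V j).Finite ∧ V j ⊆ 𝒰j j)
    (hIc : IsIndexPartition Ic) (hIcne : ∀ σ, (Ic σ).Nonempty) (hIcIm : ∀ σ, Ic σ ⊆ Im σ)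
    (hJ : IsIndexPartition Jm) (hJne : ∀ σ, (Jm σ).Nonempty) :
    ∀ s ∈ cells P, ∀ u ∈ Set.pi Set.univ V,
      (∀ σ, proj (fun i => Vec (nd i)) (Ic σ) ''
          Phi (fun i => Vec (nd i)) (fun j => Vec (pd j)) Fbar (Set.pi Set.univ 𝒳i) (Set.pi Set.univ 𝒰j) (Im σ) (Jm σ) (proj (fun i => Vec (nd i)) (Im σ) '' s) (proj (fun j => Vec (pd j)) (Jm σ) u) ⊆
        proj (fun i => Vec (nd i)) (Ic σ) '' (Set.pi Set.univ 𝒳i)) →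
      Fset F s {u} ⊆ (Set.pi Set.univ 𝒳i) :=
  stmt12_general nd pd 𝒳i 𝒰j F Fbar P V Im Ic Jm hFbar hP hV hIc
end

section
/- Under Assumptions 1, 2 and 3, for every σ̂ ∈ Σ̂ with σ = γ(σ̂), every s ∈ 𝒫 and every u ∈ 𝒱, the inclusion Φ_σ(s_{I_σ}, u_{J_σ}) ⊆ Φ̂_σ̂(s_{Î_σ̂}, u_{Ĵ_σ̂}) holds. -/
open Set Function

section Projection

variable {ι : Type*} {E : ι → Type*} {I I' : Set ι}

theorem proj_eq_proj_of_subset (h : I' ⊆ I) {x y : (i : ι) → E i}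
    (hxy : proj E I x = proj E I y) : proj E I' x = proj E I' y :=
  funext fun i => congrFun hxy ⟨i.1, h i.2⟩

theorem preimage_proj_image_subset_of_subset (h : I' ⊆ I) (s : Set ((i : ι) → E i)) :
    proj E I ⁻¹' (proj E I '' s) ⊆ proj E I' ⁻¹' (proj E I' '' s) := by
  rintro x ⟨y, hys, hyx⟩
  exact ⟨y, hys, proj_eq_proj_of_subset h hyx⟩

theorem preimage_proj_singleton_subset_of_subset (h : I' ⊆ I) (x : (i : ι) → E i) :
    proj E I ⁻¹' {proj E I x} ⊆ proj E I' ⁻¹' {proj E I' x} := by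
  simpa only [image_singleton] using preimage_proj_image_subset_of_subset (E := E) h {x}

end Projection

theorem Phi_proj_subset_of_subset {ι κ : Type*} {E : ι → Type*} {Fu : κ → Type*}
    {Fbar : Set ((i : ι) → E i) → Set ((j : κ) → Fu j) → Set ((i : ι) → E i)}
    {Xset : Set ((i : ι) → E i)} {Uset : Set ((j : κ) → Fu j)}
    (hMono : ∀ A A' B B', A ⊆ A' → B ⊆ B' → B' ⊆ Uset → Fbar A B ⊆ Fbar A' B')
    {I I' : Set ι} {J J' : Set κ} (hI : I' ⊆ I) (hJ : J' ⊆ J)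
    (s : Set ((i : ι) → E i)) (u : (j : κ) → Fu j) :
    Phi E Fu Fbar Xset Uset I J (proj E I '' s) (proj Fu J u) ⊆
      Phi E Fu Fbar Xset Uset I' J' (proj E I' '' s) (proj Fu J' u) :=
  hMono _ _ _ _
    (inter_subset_inter_right _ (preimage_proj_image_subset_of_subset hI s))
    (inter_subset_inter_right _ (preimage_proj_singleton_subset_of_subset hJ u))
    inter_subset_left

theorem stmt13_general
    {ι κ τ : Type*}
    (nd : ι → ℕ) (pd : κ → ℕ)
    (𝒳i : (i : ι) → Set (Vec (nd i))) (𝒰j : (j : κ) → Set (Vec (pd j)))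
    (Fbar : Set ((i : ι) → Vec (nd i)) → Set ((j : κ) → Vec (pd j)) →
      Set ((i : ι) → Vec (nd i)))
    (P : (i : ι) → Set (Set (Vec (nd i)))) (V : (j : κ) → Set (Vec (pd j)))
    (Im Ic : τ → Set ι) (Jm : τ → Set κ)
    {τ' : Type*}
    (Im' Ic' : τ' → Set ι) (Jm' : τ' → Set κ)
    (γ : τ' → τ)
    (hA2 : ∀ σ', Ic' σ' ⊆ Ic (γ σ') ∧ Im' σ' ⊆ Im (γ σ') ∧ Jm' σ' ⊆ Jm (γ σ'))
    (hMono : ∀ A A' B B', A ⊆ A' → B ⊆ B' → B' ⊆ Set.pi Set.univ 𝒰j → Fbar A B ⊆ Fbar A' B') :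
    ∀ σ' : τ', ∀ s ∈ cells P, ∀ u ∈ Set.pi Set.univ V,
      Phi (fun i => Vec (nd i)) (fun j => Vec (pd j)) Fbar (Set.pi Set.univ 𝒳i) (Set.pi Set.univ 𝒰j) (Im (γ σ')) (Jm (γ σ')) (proj (fun i => Vec (nd i)) (Im (γ σ')) '' s) (proj (fun j => Vec (pd j)) (Jm (γ σ')) u) ⊆
        Phi (fun i => Vec (nd i)) (fun j => Vec (pd j)) Fbar (Set.pi Set.univ 𝒳i) (Set.pi Set.univ 𝒰j) (Im' σ') (Jm' σ') (proj (fun i => Vec (nd i)) (Im' σ') '' s) (proj (fun j => Vec (pd j)) (Jm' σ') u) :=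
  fun σ' s _ u _ => Phi_proj_subset_of_subset hMono (hA2 σ').2.1 (hA2 σ').2.2 s u

theorem stmt13
    {ι κ τ : Type*} [Finite ι] [Finite κ] [Finite τ]
    (nd : ι → ℕ) (pd : κ → ℕ)
    (𝒳i : (i : ι) → Set (Vec (nd i))) (𝒰j : (j : κ) → Set (Vec (pd j)))
    (F : ((i : ι) → Vec (nd i)) → ((j : κ) → Vec (pd j)) → Set ((i : ι) → Vec (nd i)))
    (Fbar : Set ((i : ι) → Vec (nd i)) → Set ((j : κ) → Vec (pd j)) →
      Set ((i : ι) → Vec (nd i)))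
    (P : (i : ι) → Set (Set (Vec (nd i)))) (V : (j : κ) → Set (Vec (pd j)))
    (Im Ic : τ → Set ι) (Jm : τ → Set κ)
    (hF : ∀ x u, u ∈ Set.pi Set.univ 𝒰j → (F x u).Nonempty)
    (hFbar : ∀ A B, Fset F A B ⊆ Fbar A B)
    (hP : ∀ i, IsFinPartition (P i) (𝒳i i))
    (hV : ∀ j, (V j).Finite ∧ V j ⊆ 𝒰j j)
    (hIc : IsIndexPartition Ic) (hIcne : ∀ σ, (Ic σ).Nonempty) (hIcIm : ∀ σ, Ic σ ⊆ Im σ)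
    (hJ : IsIndexPartition Jm) (hJne : ∀ σ, (Jm σ).Nonempty)
    {τ' : Type*} [Finite τ']
    (Im' Ic' : τ' → Set ι) (Jm' : τ' → Set κ)
    (hIc' : IsIndexPartition Ic') (hIcne' : ∀ σ', (Ic' σ').Nonempty)
    (hIcIm' : ∀ σ', Ic' σ' ⊆ Im' σ')
    (hJ' : IsIndexPartition Jm') (hJne' : ∀ σ', (Jm' σ').Nonempty)
    (γ : τ' → τ) (hγ : Function.Surjective γ)
    (hA2 : ∀ σ', Ic' σ' ⊆ Ic (γ σ') ∧ Im' σ' ⊆ Im (γ σ') ∧ Jm' σ' ⊆ Jm (γ σ'))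
    (hMono : ∀ A A' B B', A ⊆ A' → B ⊆ B' → B' ⊆ Set.pi Set.univ 𝒰j → Fbar A B ⊆ Fbar A' B') :
    ∀ σ' : τ', ∀ s ∈ cells P, ∀ u ∈ Set.pi Set.univ V,
      Phi (fun i => Vec (nd i)) (fun j => Vec (pd j)) Fbar (Set.pi Set.univ 𝒳i) (Set.pi Set.univ 𝒰j) (Im (γ σ')) (Jm (γ σ')) (proj (fun i => Vec (nd i)) (Im (γ σ')) '' s) (proj (fun j => Vec (pd j)) (Jm (γ σ')) u) ⊆
        Phi (fun i => Vec (nd i)) (fun j => Vec (pd j)) Fbar (Set.pi Set.univ 𝒳i) (Set.pi Set.univ 𝒰j) (Im' σ') (Jm' σ') (proj (fun i => Vec (nd i)) (Im' σ') '' s) (proj (fun j => Vec (pd j)) (Jm' σ') u) :=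
  stmt13_general nd pd 𝒳i 𝒰j Fbar P V Im Ic Jm Im' Ic' Jm' γ hA2 hMono
end
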